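/- arXiv:1808.08453 — 2 statements merged into one kernel-verified Lean document; each statement's English description precedes it below -/
import Mathlib

section
/- Let D be a division ring with center F and G a subgroup of the multiplicative group of D. If every element of the subring F[G] generated by F and G is algebraic over F, then F[G] equals the division subring F(G) of D generated by F and G (i.e., F[G] is itself a division ring). -/
/-! A nonzero `x ∈ F[G]` algebraic over the centre `F` generates a finite-dimensional
`F`-subalgebra `F[x]` of the division ring `D`; left multiplication by `x` is injective on it,
hence surjective, so `x⁻¹ ∈ F[x] ⊆ F[G]`. -/

theorem Subring.inv_mem_of_isAlgebraic {K D : Type*} [Field K] [DivisionRing D] [Algebra K D]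
    {S : Subring D} (hK : Set.range (algebraMap K D) ⊆ S) {x : D} (hx : x ∈ S)
    (halg : IsAlgebraic K x) : x⁻¹ ∈ S :=
  halg.isIntegral.inv_mem (A := { S with algebraMap_mem' := fun a => hK ⟨a, rfl⟩ }) hx

/-- If every element of the subring `F[G]` generated by the center `F` of a division
ring `D` and a subgroup `G ≤ Dˣ` is algebraic over `F`, then `F[G]` is closed under
inverses, i.e. `F[G]` coincides with the division subring `F(G)`. -/
theorem stmt0 {D : Type*} [DivisionRing D] (G : Subgroup Dˣ) (S : Subring D)
    (hS : S = Subring.closure ((Subring.center D : Set D) ∪ ((↑) '' (G : Set Dˣ))))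
    (halg : ∀ x ∈ S, IsAlgebraic (Subring.center D) x) :
    ∀ x ∈ S, x ≠ 0 → x⁻¹ ∈ S := by
  have hcenter : Set.range (algebraMap (Subring.center D) D) ⊆ S := by
    rintro _ ⟨a, rfl⟩
    exact hS ▸ Subring.subset_closure (Or.inl a.2)
  exact fun x hx _ => Subring.inv_mem_of_isAlgebraic hcenter hx (halg x hx)
end

section
/- Let D be a division ring with center F, let K be a subfield of M_n(D) containing F, and let M be a subgroup of GL_n(D) normalizing K^*, with K^* ∩ M of finite index m in M. If {x_1, …, x_m} is a transversal of K^* ∩ M in M, then R = x_1 K + x_2 K + ⋯ + x_m K is a subring of M_n(D) containing M and K; consequently, if F[M] = M_n(D) then the right dimension [M_n(D) : K]_r is at most m. -/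
/-! Every `a ∈ M` lies in a coset `xᵢ (K ∩ M)`, so `a k = xᵢ ((xᵢ⁻¹ a) k) ∈ xᵢ K` for `k ∈ K`.
For products, `xᵢ c · xⱼ d = (xᵢ xⱼ) ((xⱼ⁻¹ c xⱼ) d)` with `xⱼ⁻¹ c xⱼ ∈ K` because `M` normalizes `K`,
and `xᵢ xⱼ ∈ M`; so `x₁ K + ⋯ + xₘ K` is closed under multiplication. It contains `F` and `M`,
hence `F[M]`. -/

section

variable {A : Type*} [Ring A] (K : Subring A) {ι : Type*} [Fintype ι] (x : ι → Aˣ)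

/-- The right `K`-span `x₁ K + ⋯ + xₘ K`. -/
def rightSpan : AddSubgroup A where
  carrier := {r | ∃ c : ι → A, (∀ i, c i ∈ K) ∧ r = ∑ i, (x i : A) * c i}
  zero_mem' := ⟨0, fun _ => K.zero_mem, by simp⟩
  add_mem' := by
    rintro _ _ ⟨c, hc, rfl⟩ ⟨d, hd, rfl⟩
    exact ⟨c + d, fun i => K.add_mem (hc i) (hd i), by simp [mul_add, Finset.sum_add_distrib]⟩
  neg_mem' := by
    rintro _ ⟨c, hc, rfl⟩
    exact ⟨-c, fun i => K.neg_mem (hc i), by simp [Finset.sum_neg_distrib]⟩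

theorem mul_mem_rightSpan (i : ι) {k : A} (hk : k ∈ K) : (x i : A) * k ∈ rightSpan K x := by
  classical
  refine ⟨Pi.single i k, fun j => ?_, by simp [Pi.single_apply, mul_ite]⟩
  by_cases h : j = i
  · subst h; simpa using hk
  · simp [h, K.zero_mem]

variable {K x} {M : Submonoid Aˣ}

theorem units_mul_mem_rightSpan (hcover : ∀ a ∈ M, ∃ i, (((x i)⁻¹ * a : Aˣ) : A) ∈ K)
    {a : Aˣ} (ha : a ∈ M) {k : A} (hk : k ∈ K) : (a : A) * k ∈ rightSpan K x := by
  obtain ⟨i, hi⟩ := hcover a ha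
  have hfactor : (a : A) * k = (x i : A) * ((((x i)⁻¹ * a : Aˣ) : A) * k) := by
    simp only [Units.val_mul, mul_assoc, Units.mul_inv_cancel_left]
  rw [hfactor]
  exact mul_mem_rightSpan K x i (K.mul_mem hi hk)

theorem mul_mem_rightSpan_of_mem (hcover : ∀ a ∈ M, ∃ i, (((x i)⁻¹ * a : Aˣ) : A) ∈ K)
    (hxM : ∀ i, x i ∈ M) (hnorm : ∀ a ∈ M, ∀ y ∈ K, ((a⁻¹ : Aˣ) : A) * y * a ∈ K)
    {r s : A} (hr : r ∈ rightSpan K x) (hs : s ∈ rightSpan K x) : r * s ∈ rightSpan K x := by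
  obtain ⟨c, hc, rfl⟩ := hr
  obtain ⟨d, hd, rfl⟩ := hs
  rw [Finset.sum_mul_sum]
  refine AddSubgroup.sum_mem _ fun i _ => AddSubgroup.sum_mem _ fun j _ => ?_
  have hfactor : (x i : A) * c i * ((x j : A) * d j)
      = ((x i * x j : Aˣ) : A) * (((x j)⁻¹ : Aˣ) * c i * x j * d j) := by
    simp only [Units.val_mul, mul_assoc, Units.mul_inv_cancel_left]
  rw [hfactor]
  exact units_mul_mem_rightSpan hcover (M.mul_mem (hxM i) (hxM j))
    (K.mul_mem (hnorm (x j) (hxM j) (c i) (hc i)) (hd j))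

variable (K x M)

def transversalSubring (hcover : ∀ a ∈ M, ∃ i, (((x i)⁻¹ * a : Aˣ) : A) ∈ K)
    (hxM : ∀ i, x i ∈ M) (hnorm : ∀ a ∈ M, ∀ y ∈ K, ((a⁻¹ : Aˣ) : A) * y * a ∈ K) :
    Subring A where
  __ := rightSpan K x
  one_mem' := by simpa using units_mul_mem_rightSpan hcover M.one_mem K.one_mem
  mul_mem' := mul_mem_rightSpan_of_mem hcover hxM hnorm

variable {K x M}
variable (hcover : ∀ a ∈ M, ∃ i, (((x i)⁻¹ * a : Aˣ) : A) ∈ K)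
    (hxM : ∀ i, x i ∈ M) (hnorm : ∀ a ∈ M, ∀ y ∈ K, ((a⁻¹ : Aˣ) : A) * y * a ∈ K)

theorem coe_transversalSubring :
    (transversalSubring K x M hcover hxM hnorm : Set A) =
      {r | ∃ c : ι → A, (∀ i, c i ∈ K) ∧ r = ∑ i, (x i : A) * c i} :=
  rfl

theorem units_mem_transversalSubring {a : Aˣ} (ha : a ∈ M) :
    (a : A) ∈ transversalSubring K x M hcover hxM hnorm :=
  show (a : A) ∈ rightSpan K x by simpa using units_mul_mem_rightSpan hcover ha K.one_mem

theorem le_transversalSubring : K ≤ transversalSubring K x M hcover hxM hnorm := fun k hk =>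
  show k ∈ rightSpan K x by simpa using units_mul_mem_rightSpan hcover M.one_mem hk

theorem closure_union_le_transversalSubring {s : Set A} (hs : s ⊆ K) :
    Subring.closure (s ∪ {y | ∃ a ∈ M, y = a}) ≤ transversalSubring K x M hcover hxM hnorm := by
  rw [Subring.closure_le]
  rintro _ (hy | ⟨a, ha, rfl⟩)
  · exact le_transversalSubring hcover hxM hnorm (hs hy)
  · exact units_mem_transversalSubring hcover hxM hnorm ha

end

theorem stmt15_general {D : Type*} [DivisionRing D] {n : ℕ}
    (K : Subring (Matrix (Fin n) (Fin n) D))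
    (hFK : ∀ c ∈ Subring.center D, c • (1 : Matrix (Fin n) (Fin n) D) ∈ K)
    (M : Subgroup (Matrix (Fin n) (Fin n) D)ˣ)
    (hnorm : ∀ a ∈ M, ∀ y ∈ K,
      (a.val * y * (a⁻¹).val ∈ K) ∧ ((a⁻¹).val * y * a.val ∈ K))
    {m : ℕ} (x : Fin m → (Matrix (Fin n) (Fin n) D)ˣ)
    (hxM : ∀ i, x i ∈ M)
    (htrans : ∀ a ∈ M, ∃! i : Fin m, ((x i)⁻¹ * a).val ∈ K) :
    (∃ R : Subring (Matrix (Fin n) (Fin n) D),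
      (R : Set (Matrix (Fin n) (Fin n) D)) =
        {r | ∃ c : Fin m → Matrix (Fin n) (Fin n) D,
          (∀ i, c i ∈ K) ∧ r = ∑ i, (x i).val * c i} ∧
      (∀ a ∈ M, a.val ∈ R) ∧ (K : Set (Matrix (Fin n) (Fin n) D)) ⊆ R) ∧
    (Subring.closure ({y | ∃ c ∈ Subring.center D,
        y = c • (1 : Matrix (Fin n) (Fin n) D)} ∪ {y | ∃ a ∈ M, y = a.val}) = ⊤ →
      ∀ y : Matrix (Fin n) (Fin n) D, ∃ c : Fin m → Matrix (Fin n) (Fin n) D,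
        (∀ i, c i ∈ K) ∧ y = ∑ i, (x i).val * c i) := by
  have hcover : ∀ a ∈ M.toSubmonoid, ∃ i, ((x i)⁻¹ * a).val ∈ K :=
    fun a ha => (htrans a ha).exists
  have hconj : ∀ a ∈ M.toSubmonoid, ∀ y ∈ K, (a⁻¹).val * y * a.val ∈ K :=
    fun a ha y hy => (hnorm a ha y hy).2
  set R := transversalSubring K x M.toSubmonoid hcover hxM hconj
  refine ⟨⟨R, coe_transversalSubring hcover hxM hconj,
    fun a ha => units_mem_transversalSubring hcover hxM hconj ha,
    le_transversalSubring hcover hxM hconj⟩, fun htop y => ?_⟩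
  have hscalars : {y | ∃ c ∈ Subring.center D, y = c • (1 : Matrix (Fin n) (Fin n) D)} ⊆ K := by
    rintro _ ⟨c, hc, rfl⟩
    exact hFK c hc
  exact htop.symm.trans_le (closure_union_le_transversalSubring hcover hxM hconj hscalars)
    (Subring.mem_top y)

/-- Let `D` be a division ring with center `F`, `K` a subfield of `M_n(D)`
containing `F`, and `M ≤ GL_n(D)` a subgroup normalizing `K^*` such that
`K^* ∩ M` has finite index `m` in `M`, with transversal `x_1, …, x_m`.  Then
`R = x_1 K + ⋯ + x_m K` is a subring of `M_n(D)` containing `M` and `K`;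
consequently, if `F[M] = M_n(D)` then `M_n(D)` is spanned by `x_1, …, x_m` as a
right `K`-vector space, so `[M_n(D) : K]_r ≤ m`. -/
theorem stmt15 {D : Type*} [DivisionRing D] {n : ℕ} (hn : 0 < n)
    (K : Subring (Matrix (Fin n) (Fin n) D))
    (hKcomm : ∀ a ∈ K, ∀ b ∈ K, a * b = b * a)
    (hKinv : ∀ a ∈ K, a ≠ 0 → ∃ b ∈ K, a * b = 1 ∧ b * a = 1)
    (hFK : ∀ c ∈ Subring.center D, c • (1 : Matrix (Fin n) (Fin n) D) ∈ K)
    (M : Subgroup (Matrix (Fin n) (Fin n) D)ˣ)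
    (hnorm : ∀ a ∈ M, ∀ y ∈ K,
      (a.val * y * (a⁻¹).val ∈ K) ∧ ((a⁻¹).val * y * a.val ∈ K))
    {m : ℕ} (x : Fin m → (Matrix (Fin n) (Fin n) D)ˣ)
    (hxM : ∀ i, x i ∈ M)
    (htrans : ∀ a ∈ M, ∃! i : Fin m, ((x i)⁻¹ * a).val ∈ K) :
    (∃ R : Subring (Matrix (Fin n) (Fin n) D),
      (R : Set (Matrix (Fin n) (Fin n) D)) =
        {r | ∃ c : Fin m → Matrix (Fin n) (Fin n) D,
          (∀ i, c i ∈ K) ∧ r = ∑ i, (x i).val * c i} ∧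
      (∀ a ∈ M, a.val ∈ R) ∧ (K : Set (Matrix (Fin n) (Fin n) D)) ⊆ R) ∧
    (Subring.closure ({y | ∃ c ∈ Subring.center D,
        y = c • (1 : Matrix (Fin n) (Fin n) D)} ∪ {y | ∃ a ∈ M, y = a.val}) = ⊤ →
      ∀ y : Matrix (Fin n) (Fin n) D, ∃ c : Fin m → Matrix (Fin n) (Fin n) D,
        (∀ i, c i ∈ K) ∧ y = ∑ i, (x i).val * c i) :=
  stmt15_general K hFK M hnorm x hxM htrans
end
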